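/- Let R ≥ 1 be a natural number and let ξ_1, …, ξ_R ∈ ℝ and τ_1, …, τ_R ≥ 0 be reals. Define Ê(x) := (1/R) ∑_{r=1}^R (τ_r − (ξ_r − x)_+)_+ for x ∈ ℝ. Then: (i) Ê is nondecreasing; (ii) Ê is 1-Lipschitz; and (iii) for every open interval I disjoint from the finite set {ξ_r : 1 ≤ r ≤ R} ∪ {ξ_r − τ_r : 1 ≤ r ≤ R}, Ê is affine on I with slope (1/R) · |{r : ξ_r − τ_r < x₀ < ξ_r}| for any x₀ ∈ I; that is, Ê(y) − Ê(x) = (y − x) · (1/R) · |{r : ξ_r − τ_r < x₀ < ξ_r}| for all x, y, x₀ ∈ I. -/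

import Mathlib

open Finset

/-!
Each summand `x ↦ (τ - (ξ - x)₊)₊` is nondecreasing and 1-Lipschitz, and on an interval
containing neither `ξ` nor `ξ - τ` it is either constant or `x ↦ x - (ξ - τ)`, the latter exactly
when the interval lies in `(ξ - τ, ξ)`. Averaging preserves all three properties.
-/

abbrev waitingTime (ξ τ x : ℝ) : ℝ := max (τ - max (ξ - x) 0) 0

lemma waitingTime_monotone (ξ τ : ℝ) : Monotone (waitingTime ξ τ) := by
  intro x y hxy
  unfold waitingTime
  gcongr

lemma waitingTime_lipschitzWith_one (ξ τ : ℝ) : LipschitzWith 1 (waitingTime ξ τ) := by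
  refine LipschitzWith.of_dist_le_mul fun x y => ?_
  rw [NNReal.coe_one, one_mul, Real.dist_eq, Real.dist_eq]
  calc |waitingTime ξ τ x - waitingTime ξ τ y|
      ≤ |(τ - max (ξ - x) 0) - (τ - max (ξ - y) 0)| := abs_max_sub_max_le_abs _ _ _
    _ = |max (ξ - y) 0 - max (ξ - x) 0| := by ring_nf
    _ ≤ |(ξ - y) - (ξ - x)| := abs_max_sub_max_le_abs _ _ _
    _ = |x - y| := by ring_nf

lemma waitingTime_sub_eq {ξ τ a b x y x₀ : ℝ} (hξ : ξ ∉ Set.Ioo a b) (hξτ : ξ - τ ∉ Set.Ioo a b)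
    (hx : x ∈ Set.Ioo a b) (hy : y ∈ Set.Ioo a b) (hx₀ : x₀ ∈ Set.Ioo a b) :
    waitingTime ξ τ y - waitingTime ξ τ x =
      (y - x) * if ξ - τ < x₀ ∧ x₀ < ξ then 1 else 0 := by
  simp only [Set.mem_Ioo, not_and_or, not_lt] at hξ hξτ hx hy hx₀
  obtain ⟨hxa, hxb⟩ := hx
  obtain ⟨hya, hyb⟩ := hy
  obtain ⟨hx₀a, hx₀b⟩ := hx₀
  unfold waitingTime
  rcases hξ with hξa | hξb
  · rw [if_neg (by intro h; linarith [h.2]), max_eq_right (by linarith : ξ - y ≤ 0),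
      max_eq_right (by linarith : ξ - x ≤ 0)]
    ring
  rw [max_eq_left (by linarith : 0 ≤ ξ - y), max_eq_left (by linarith : 0 ≤ ξ - x)]
  rcases hξτ with hξτa | hξτb
  · rw [if_pos ⟨by linarith, by linarith⟩, max_eq_left (by linarith : 0 ≤ τ - (ξ - y)),
      max_eq_left (by linarith : 0 ≤ τ - (ξ - x))]
    ring
  · rw [if_neg (by intro h; linarith [h.1]), max_eq_right (by linarith : τ - (ξ - y) ≤ 0),
      max_eq_right (by linarith : τ - (ξ - x) ≤ 0)]
    ring

section Average

variable {ι : Type*} [Fintype ι]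

lemma monotone_average {f : ι → ℝ → ℝ} (hf : ∀ i, Monotone (f i)) :
    Monotone fun x => (1 / (Fintype.card ι : ℝ)) * ∑ i, f i x :=
  Monotone.const_mul (fun _ _ hxy => sum_le_sum fun i _ => hf i hxy) (by positivity)

lemma lipschitzWith_one_average {f : ι → ℝ → ℝ} (hf : ∀ i, LipschitzWith 1 (f i)) :
    LipschitzWith 1 fun x => (1 / (Fintype.card ι : ℝ)) * ∑ i, f i x := by
  refine LipschitzWith.of_dist_le_mul fun x y => ?_
  have hterm : ∀ i, |f i x - f i y| ≤ |x - y| := fun i => by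
    simpa [Real.dist_eq] using (hf i).dist_le_mul x y
  rw [NNReal.coe_one, one_mul, Real.dist_eq, Real.dist_eq, ← mul_sub, ← sum_sub_distrib,
    abs_mul, abs_of_nonneg (by positivity)]
  calc 1 / (Fintype.card ι : ℝ) * |∑ i, (f i x - f i y)|
      ≤ 1 / (Fintype.card ι : ℝ) * ∑ _i : ι, |x - y| := by
        gcongr
        exact (abs_sum_le_sum_abs _ _).trans (sum_le_sum fun i _ => hterm i)
    _ ≤ |x - y| := by
        rw [sum_const, card_univ, nsmul_eq_mul, ← mul_assoc, one_div]
        exact mul_le_of_le_one_left (abs_nonneg _) (inv_mul_le_one_of_le₀ le_rfl (by positivity))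

end Average

theorem stmt_18_general (R : ℕ) (ξ τ : Fin R → ℝ) :
    Monotone (fun x : ℝ => (1 / (R : ℝ)) * ∑ r, max (τ r - max (ξ r - x) 0) 0) ∧
    LipschitzWith 1 (fun x : ℝ => (1 / (R : ℝ)) * ∑ r, max (τ r - max (ξ r - x) 0) 0) ∧
    (∀ a b : ℝ, (∀ r, ξ r ∉ Set.Ioo a b) → (∀ r, ξ r - τ r ∉ Set.Ioo a b) →
      ∀ x ∈ Set.Ioo a b, ∀ y ∈ Set.Ioo a b, ∀ x₀ ∈ Set.Ioo a b,
        (1 / (R : ℝ)) * ∑ r, max (τ r - max (ξ r - y) 0) 0 -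
          (1 / (R : ℝ)) * ∑ r, max (τ r - max (ξ r - x) 0) 0 =
        (y - x) * ((1 / (R : ℝ)) *
          ((Finset.univ.filter fun r => ξ r - τ r < x₀ ∧ x₀ < ξ r).card : ℝ))) := by
  refine ⟨?_, ?_, ?_⟩
  · simpa only [Fintype.card_fin] using monotone_average fun r => waitingTime_monotone (ξ r) (τ r)
  · simpa only [Fintype.card_fin] using
      lipschitzWith_one_average fun r => waitingTime_lipschitzWith_one (ξ r) (τ r)
  · intro a b hξ hξτ x hx y hy x₀ hx₀
    rw [← mul_sub, ← sum_sub_distrib, mul_left_comm]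
    congr 1
    rw [← sum_boole, mul_sum]
    exact sum_congr rfl fun r _ => waitingTime_sub_eq (hξ r) (hξτ r) hx hy hx₀

/-- Properties of the Monte Carlo estimate `Ê(x) = (1/R) ∑_r (τ_r - (ξ_r - x)₊)₊`:
it is nondecreasing, 1-Lipschitz, and affine on every open interval avoiding the
breakpoints `{ξ_r}` and `{ξ_r - τ_r}`, with slope `|{r : ξ_r - τ_r < x₀ < ξ_r}| / R`. -/
theorem stmt_18 (R : ℕ) (hR : 1 ≤ R) (ξ τ : Fin R → ℝ) (hτ : ∀ r, 0 ≤ τ r) :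
    Monotone (fun x : ℝ => (1 / (R : ℝ)) * ∑ r, max (τ r - max (ξ r - x) 0) 0) ∧
    LipschitzWith 1 (fun x : ℝ => (1 / (R : ℝ)) * ∑ r, max (τ r - max (ξ r - x) 0) 0) ∧
    (∀ a b : ℝ, (∀ r, ξ r ∉ Set.Ioo a b) → (∀ r, ξ r - τ r ∉ Set.Ioo a b) →
      ∀ x ∈ Set.Ioo a b, ∀ y ∈ Set.Ioo a b, ∀ x₀ ∈ Set.Ioo a b,
        (1 / (R : ℝ)) * ∑ r, max (τ r - max (ξ r - y) 0) 0 -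
          (1 / (R : ℝ)) * ∑ r, max (τ r - max (ξ r - x) 0) 0 =
        (y - x) * ((1 / (R : ℝ)) *
          ((Finset.univ.filter fun r => ξ r - τ r < x₀ ∧ x₀ < ξ r).card : ℝ))) :=
  stmt_18_general R ξ τ
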